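/- Let A be a k-linear Hopf category with object class X. Then the antipode is anti-comultiplicative and counital: for all x, y ∈ X and all h ∈ A_{x,y}, one has Δ_{y,x}(S_{x,y}(h)) = S_{x,y}(h_(2)) ⊗ S_{x,y}(h_(1)) in A_{y,x} ⊗ A_{y,x}, and ε_{y,x}(S_{x,y}(h)) = ε_{x,y}(h). -/
import Mathlib
open TensorProduct

section Aux
variable {k : Type*} [CommRing k]

private lemma aux_assoc_nat {M M' P Q : Type*}
    [AddCommGroup M] [AddCommGroup M'] [AddCommGroup P] [AddCommGroup Q]
    [Module k M] [Module k M'] [Module k P] [Module k Q] (F : M →ₗ[k] M') :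
    (TensorProduct.assoc k M' P Q).toLinearMap ∘ₗ
        (TensorProduct.map (TensorProduct.map F LinearMap.id) LinearMap.id)
      = (TensorProduct.map F LinearMap.id) ∘ₗ (TensorProduct.assoc k M P Q).toLinearMap := by
  apply TensorProduct.ext_threefold
  intro a b c
  simp

private lemma aux_map_left {M M' M'' C : Type*}
    [AddCommGroup M] [AddCommGroup M'] [AddCommGroup M''] [AddCommGroup C]
    [Module k M] [Module k M'] [Module k M''] [Module k C]
    (f : M →ₗ[k] M') (g : M' →ₗ[k] M'') :
    (TensorProduct.map g LinearMap.id) ∘ₗ (TensorProduct.map f (LinearMap.id : C →ₗ[k] C))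
      = TensorProduct.map (g ∘ₗ f) LinearMap.id := by
  rw [← TensorProduct.map_comp, LinearMap.id_comp]

variable {X : Type*} (A : X → X → Type*)
  [∀ x y, AddCommGroup (A x y)] [∀ x y, Module k (A x y)]
  (mul : ∀ x y z, A x y →ₗ[k] A y z →ₗ[k] A x z)

noncomputable def Mlin (u v w : X) :
    (A u v ⊗[k] A u v) ⊗[k] (A v w ⊗[k] A v w) →ₗ[k] A u w ⊗[k] A u w :=
  (TensorProduct.map (TensorProduct.lift (mul u v w)) (TensorProduct.lift (mul u v w))) ∘ₗ
    (TensorProduct.tensorTensorTensorComm k (A u v) (A u v) (A v w) (A v w)).toLinearMap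

@[simp] lemma Mlin_tmul (u v w : X) (a b : A u v) (c d : A v w) :
    Mlin A mul u v w ((a ⊗ₜ[k] b) ⊗ₜ[k] (c ⊗ₜ[k] d)) = (mul u v w a c) ⊗ₜ[k] (mul u v w b d) := by
  simp [Mlin]

end Aux
theorem hopf_category_antipode_anticomultiplicative
    {k : Type*} [CommRing k] {X : Type*}
    (A : X → X → Type*)
    [∀ x y, AddCommGroup (A x y)] [∀ x y, Module k (A x y)]
    (Δ : ∀ x y, A x y →ₗ[k] A x y ⊗[k] A x y)
    (ε : ∀ x y, A x y →ₗ[k] k)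
    (mul : ∀ x y z, A x y →ₗ[k] A y z →ₗ[k] A x z)
    (one : ∀ x, A x x)
    (coassoc : ∀ x y (a : A x y),
      (TensorProduct.assoc k (A x y) (A x y) (A x y))
          ((TensorProduct.map (Δ x y) LinearMap.id) (Δ x y a))
        = (TensorProduct.map LinearMap.id (Δ x y)) (Δ x y a))
    (counit_left : ∀ x y (a : A x y),
      (TensorProduct.lid k (A x y)) ((TensorProduct.map (ε x y) LinearMap.id) (Δ x y a)) = a)
    (counit_right : ∀ x y (a : A x y),
      (TensorProduct.rid k (A x y)) ((TensorProduct.map LinearMap.id (ε x y)) (Δ x y a)) = a)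
    (mul_assoc' : ∀ x y z w (a : A x y) (b : A y z) (c : A z w),
      mul x z w (mul x y z a b) c = mul x y w a (mul y z w b c))
    (one_mul' : ∀ x y (a : A x y), mul x x y (one x) a = a)
    (mul_one' : ∀ x y (a : A x y), mul x y y a (one y) = a)
    (Δ_mul : ∀ x y z (a : A x y) (b : A y z),
      Δ x z (mul x y z a b)
        = (TensorProduct.map (TensorProduct.lift (mul x y z)) (TensorProduct.lift (mul x y z)))
            ((TensorProduct.tensorTensorTensorComm k (A x y) (A x y) (A y z) (A y z))
              ((Δ x y a) ⊗ₜ[k] (Δ y z b))))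
    (ε_mul : ∀ x y z (a : A x y) (b : A y z),
      ε x z (mul x y z a b) = ε x y a * ε y z b)
    (Δ_one : ∀ x, Δ x x (one x) = (one x) ⊗ₜ[k] (one x))
    (ε_one : ∀ x, ε x x (one x) = 1)
    (S : ∀ x y, A x y →ₗ[k] A y x)
    (S_left : ∀ x y (h : A x y),
      (TensorProduct.lift (mul x y x)) ((TensorProduct.map LinearMap.id (S x y)) (Δ x y h))
        = ε x y h • one x)
    (S_right : ∀ x y (h : A x y),
      (TensorProduct.lift (mul y x y)) ((TensorProduct.map (S x y) LinearMap.id) (Δ x y h))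
        = ε x y h • one y)
 :
    ∀ x y (h : A x y),
      Δ y x (S x y h)
          = (TensorProduct.map (S x y) (S x y))
              ((TensorProduct.comm k (A x y) (A x y)) (Δ x y h))
        ∧ ε y x (S x y h) = ε x y h := by
  intro x y
  -- shorthand facts about Mlin
  have hMone_right : ∀ (t : A y x ⊗[k] A y x),
      Mlin A mul y x x (t ⊗ₜ[k] ((one x) ⊗ₜ[k] (one x))) = t := by
    intro t
    induction t using TensorProduct.induction_on with
    | zero => simp
    | tmul u v => simp [mul_one']
    | add p q hp hq => rw [add_tmul, map_add, hp, hq]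
  have hMone_left : ∀ (t : A y x ⊗[k] A y x),
      Mlin A mul y y x (((one y) ⊗ₜ[k] (one y)) ⊗ₜ[k] t) = t := by
    intro t
    induction t using TensorProduct.induction_on with
    | zero => simp
    | tmul u v => simp [one_mul']
    | add p q hp hq => rw [tmul_add, map_add, hp, hq]
  have hMassoc : ∀ (u v w z : X) (p : A u v ⊗[k] A u v) (q : A v w ⊗[k] A v w)
      (r : A w z ⊗[k] A w z),
      Mlin A mul u w z ((Mlin A mul u v w (p ⊗ₜ[k] q)) ⊗ₜ[k] r)
        = Mlin A mul u v z (p ⊗ₜ[k] (Mlin A mul v w z (q ⊗ₜ[k] r))) := by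
    intro u v w z p q r
    induction p using TensorProduct.induction_on with
    | zero => simp
    | add p₁ p₂ h1 h2 => simp only [add_tmul, tmul_add, map_add, h1, h2]
    | tmul a b =>
      induction q using TensorProduct.induction_on with
      | zero => simp
      | add q₁ q₂ h1 h2 => simp only [add_tmul, tmul_add, map_add, h1, h2]
      | tmul c d =>
        induction r using TensorProduct.induction_on with
        | zero => simp
        | add r₁ r₂ h1 h2 => simp only [add_tmul, tmul_add, map_add, h1, h2]
        | tmul e f' => simp [mul_assoc']
  -- epsilon part
  have eps_part : ∀ h : A x y, ε y x (S x y h) = ε x y h := by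
    intro h
    have e3 : ((ε y x) ∘ₗ (S x y)) ∘ₗ (TensorProduct.rid k (A x y)).toLinearMap ∘ₗ
          (TensorProduct.map LinearMap.id (ε x y))
        = (LinearMap.mul' k k) ∘ₗ TensorProduct.map ((ε y x) ∘ₗ (S x y)) (ε x y) := by
      apply TensorProduct.ext'
      intro a b
      simp [mul_comm]
    have e4 : (LinearMap.mul' k k) ∘ₗ TensorProduct.map ((ε y x) ∘ₗ (S x y)) (ε x y)
        = (ε y y) ∘ₗ (TensorProduct.lift (mul y x y)) ∘ₗ
            (TensorProduct.map (S x y) LinearMap.id) := by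
      apply TensorProduct.ext'
      intro a b
      simp [ε_mul]
    have := LinearMap.congr_fun (e3.trans e4) (Δ x y h)
    simp only [LinearMap.comp_apply, LinearEquiv.coe_coe] at this
    rw [counit_right x y h] at this
    rw [this, S_right, map_smul, ε_one, smul_eq_mul, mul_one]
  -- claim 2
  have claim2 : ∀ h : A x y,
      Mlin A mul x y x ((TensorProduct.map (Δ x y)
          ((TensorProduct.map (S x y) (S x y)) ∘ₗ (TensorProduct.comm k (A x y) (A x y)).toLinearMap ∘ₗ (Δ x y)))
        (Δ x y h)) = ε x y h • ((one x) ⊗ₜ[k] (one x)) := by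
    intro h
    have hG : (TensorProduct.map (Δ x y)
          ((TensorProduct.map (S x y) (S x y)) ∘ₗ (TensorProduct.comm k (A x y) (A x y)).toLinearMap ∘ₗ (Δ x y)))
        = (TensorProduct.map LinearMap.id
            ((TensorProduct.map (S x y) (S x y)) ∘ₗ (TensorProduct.comm k (A x y) (A x y)).toLinearMap))
            ∘ₗ (TensorProduct.map (Δ x y) (Δ x y)) := by
      apply TensorProduct.ext'; intro a b; simp
    have hsplit : (TensorProduct.map (Δ x y) (Δ x y))
        = (TensorProduct.map (Δ x y) (LinearMap.id : A x y ⊗[k] A x y →ₗ[k] A x y ⊗[k] A x y))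
            ∘ₗ (TensorProduct.map LinearMap.id (Δ x y)) := by
      apply TensorProduct.ext'; intro a b; simp
    have hF : (TensorProduct.map (Δ x y) LinearMap.id) ∘ₗ Δ x y
        = (TensorProduct.assoc k (A x y) (A x y) (A x y)).symm.toLinearMap
            ∘ₗ ((TensorProduct.map LinearMap.id (Δ x y)) ∘ₗ Δ x y) := by
      apply LinearMap.ext; intro a
      simp only [LinearMap.comp_apply, LinearEquiv.coe_coe]
      rw [← coassoc x y a]
      simp
    have s3 : TensorProduct.map (TensorProduct.map (Δ x y) LinearMap.id) LinearMap.id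
          ((TensorProduct.map (Δ x y) LinearMap.id) (Δ x y h))
        = TensorProduct.map (TensorProduct.assoc k (A x y) (A x y) (A x y)).symm.toLinearMap
            LinearMap.id
            ((TensorProduct.map (TensorProduct.map LinearMap.id (Δ x y)) LinearMap.id)
              ((TensorProduct.map (Δ x y) LinearMap.id) (Δ x y h))) := by
      have e1 := LinearMap.congr_fun
        (aux_map_left (Δ x y) (TensorProduct.map (Δ x y) LinearMap.id)) (Δ x y h)
      have e2 := LinearMap.congr_fun
        (aux_map_left (Δ x y) (TensorProduct.map LinearMap.id (Δ x y))) (Δ x y h)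
      have e3 := LinearMap.congr_fun
        (aux_map_left ((TensorProduct.map LinearMap.id (Δ x y)) ∘ₗ Δ x y)
          (TensorProduct.assoc k (A x y) (A x y) (A x y)).symm.toLinearMap) (Δ x y h)
      simp only [LinearMap.comp_apply] at e1 e2 e3
      rw [e1, hF, ← e3, ← e2]
    have N3 : (Mlin A mul x y x)
          ∘ₗ (TensorProduct.map LinearMap.id
              ((TensorProduct.map (S x y) (S x y)) ∘ₗ (TensorProduct.comm k (A x y) (A x y)).toLinearMap))
          ∘ₗ (TensorProduct.assoc k (A x y ⊗[k] A x y) (A x y) (A x y)).toLinearMap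
          ∘ₗ (TensorProduct.map (TensorProduct.assoc k (A x y) (A x y) (A x y)).symm.toLinearMap LinearMap.id)
          ∘ₗ (TensorProduct.map (TensorProduct.map LinearMap.id (Δ x y)) LinearMap.id)
        = (TensorProduct.map
              (TensorProduct.lift (mul x y x) ∘ₗ TensorProduct.map LinearMap.id (S x y))
              (TensorProduct.lift (mul x y x) ∘ₗ TensorProduct.map LinearMap.id (S x y) ∘ₗ Δ x y))
          ∘ₗ (TensorProduct.assoc k (A x y) (A x y) (A x y)).symm.toLinearMap
          ∘ₗ (TensorProduct.map LinearMap.id (TensorProduct.comm k (A x y) (A x y)).toLinearMap)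
          ∘ₗ (TensorProduct.assoc k (A x y) (A x y) (A x y)).toLinearMap := by
      apply TensorProduct.ext_threefold
      intro a m d
      simp only [LinearMap.comp_apply, TensorProduct.map_tmul, LinearMap.id_apply,
        LinearEquiv.coe_coe, TensorProduct.assoc_tmul, TensorProduct.assoc_symm_tmul,
        TensorProduct.comm_tmul, TensorProduct.lift.tmul]
      generalize Δ x y m = t
      induction t using TensorProduct.induction_on with
      | zero => simp
      | tmul u v =>
        simp only [LinearMap.comp_apply, TensorProduct.assoc_symm_tmul, TensorProduct.map_tmul,
          LinearMap.id_apply, TensorProduct.assoc_tmul, TensorProduct.comm_tmul, Mlin_tmul,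
          TensorProduct.lift.tmul, LinearEquiv.coe_coe]
      | add t₁ t₂ h1 h2 =>
        simp only [TensorProduct.tmul_add, TensorProduct.add_tmul, map_add, h1, h2,
          TensorProduct.tmul_add]
    have hP2 : TensorProduct.lift (mul x y x) ∘ₗ TensorProduct.map LinearMap.id (S x y) ∘ₗ Δ x y
        = (ε x y).smulRight (one x) := by
      apply LinearMap.ext; intro m
      simpa using S_left x y m
    have N4 : (TensorProduct.map
              (TensorProduct.lift (mul x y x) ∘ₗ TensorProduct.map LinearMap.id (S x y))
              ((ε x y).smulRight (one x)))
          ∘ₗ (TensorProduct.assoc k (A x y) (A x y) (A x y)).symm.toLinearMap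
          ∘ₗ (TensorProduct.map LinearMap.id (TensorProduct.comm k (A x y) (A x y)).toLinearMap)
          ∘ₗ (TensorProduct.assoc k (A x y) (A x y) (A x y)).toLinearMap
        = ((TensorProduct.mk k (A x x) (A x x)).flip (one x))
          ∘ₗ (TensorProduct.lift (mul x y x) ∘ₗ TensorProduct.map LinearMap.id (S x y))
          ∘ₗ (TensorProduct.map
              ((TensorProduct.rid k (A x y)).toLinearMap ∘ₗ TensorProduct.map LinearMap.id (ε x y))
              LinearMap.id) := by
      apply TensorProduct.ext_threefold
      intro a m d
      simp [TensorProduct.smul_tmul', TensorProduct.tmul_smul, TensorProduct.mk_apply]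
    have hcr : ((TensorProduct.rid k (A x y)).toLinearMap
            ∘ₗ TensorProduct.map LinearMap.id (ε x y)) ∘ₗ Δ x y = LinearMap.id := by
      apply LinearMap.ext; intro a
      simpa using counit_right x y a
    have e5 := LinearMap.congr_fun
      (aux_map_left (Δ x y)
        ((TensorProduct.rid k (A x y)).toLinearMap ∘ₗ TensorProduct.map LinearMap.id (ε x y)))
      (Δ x y h)
    simp only [LinearMap.comp_apply] at e5
    -- assemble
    rw [hG]
    simp only [LinearMap.comp_apply]
    rw [hsplit]
    simp only [LinearMap.comp_apply]
    rw [← coassoc x y h]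
    have anat := LinearMap.congr_fun (aux_assoc_nat (k := k) (Δ x y)
      (P := A x y) (Q := A x y)) ((TensorProduct.map (Δ x y) LinearMap.id) (Δ x y h))
    simp only [LinearMap.comp_apply, LinearEquiv.coe_coe] at anat
    rw [← anat, s3]
    have N3' := LinearMap.congr_fun N3 ((TensorProduct.map (Δ x y) LinearMap.id) (Δ x y h))
    simp only [LinearMap.comp_apply, LinearEquiv.coe_coe] at N3'
    rw [N3', hP2]
    have N4' := LinearMap.congr_fun N4 ((TensorProduct.map (Δ x y) LinearMap.id) (Δ x y h))
    simp only [LinearMap.comp_apply, LinearEquiv.coe_coe] at N4'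
    rw [N4', e5, hcr, TensorProduct.map_id]
    simp only [LinearMap.id_apply, LinearMap.comp_apply]
    rw [S_left]
    simp [TensorProduct.smul_tmul', TensorProduct.mk_apply]
  have hu : (Mlin A mul x y x ∘ₗ TensorProduct.map (Δ x y)
        ((TensorProduct.map (S x y) (S x y)) ∘ₗ (TensorProduct.comm k (A x y) (A x y)).toLinearMap ∘ₗ (Δ x y)))
        ∘ₗ Δ x y = (ε x y).smulRight ((one x) ⊗ₜ[k] (one x)) := by
    apply LinearMap.ext; intro a
    simpa using claim2 a
  have N1 : ((Δ y x) ∘ₗ (S x y)) ∘ₗ (TensorProduct.rid k (A x y)).toLinearMap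
        ∘ₗ TensorProduct.map LinearMap.id (ε x y)
      = (Mlin A mul y x x) ∘ₗ TensorProduct.map ((Δ y x) ∘ₗ (S x y))
          ((ε x y).smulRight ((one x) ⊗ₜ[k] (one x))) := by
    apply TensorProduct.ext'; intro a b
    simp [hMone_right, TensorProduct.tmul_smul]
  have N5 : Mlin A mul y x y ∘ₗ TensorProduct.map (Δ y x) (Δ x y)
      = (Δ y y) ∘ₗ TensorProduct.lift (mul y x y) := by
    apply TensorProduct.ext'; intro a b
    simp only [LinearMap.comp_apply, TensorProduct.map_tmul, TensorProduct.lift.tmul, Mlin,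
      LinearEquiv.coe_coe]
    rw [Δ_mul]
  have hfΔ : TensorProduct.map ((Δ y x) ∘ₗ S x y) (Δ x y)
      = (TensorProduct.map (Δ y x) (Δ x y)) ∘ₗ (TensorProduct.map (S x y) LinearMap.id) := by
    rw [← TensorProduct.map_comp, LinearMap.comp_id]
  have claim1 : ((Mlin A mul y x y) ∘ₗ TensorProduct.map ((Δ y x) ∘ₗ S x y) (Δ x y)) ∘ₗ Δ x y
      = (ε x y).smulRight ((one y) ⊗ₜ[k] (one y)) := by
    apply LinearMap.ext; intro a
    simp only [LinearMap.comp_apply, hfΔ, LinearMap.smulRight_apply]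
    have := LinearMap.congr_fun N5 ((TensorProduct.map (S x y) LinearMap.id) (Δ x y a))
    simp only [LinearMap.comp_apply] at this
    rw [this, S_right, map_smul, Δ_one]
  have N6 : Mlin A mul y y x ∘ₗ TensorProduct.map ((ε x y).smulRight ((one y) ⊗ₜ[k] (one y)))
        ((TensorProduct.map (S x y) (S x y)) ∘ₗ (TensorProduct.comm k (A x y) (A x y)).toLinearMap ∘ₗ (Δ x y))
      = ((TensorProduct.map (S x y) (S x y)) ∘ₗ (TensorProduct.comm k (A x y) (A x y)).toLinearMap ∘ₗ (Δ x y))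
        ∘ₗ (TensorProduct.lid k (A x y)).toLinearMap ∘ₗ TensorProduct.map (ε x y) LinearMap.id := by
    apply TensorProduct.ext'; intro a b
    simp only [LinearMap.comp_apply, TensorProduct.map_tmul, LinearMap.smulRight_apply,
      LinearEquiv.coe_coe, TensorProduct.lid_tmul, LinearMap.id_apply, map_smul]
    rw [← TensorProduct.smul_tmul', map_smul, hMone_left]
  have N7 : (Mlin A mul y x x)
        ∘ₗ (TensorProduct.map ((Δ y x) ∘ₗ S x y)
            (Mlin A mul x y x ∘ₗ TensorProduct.map (Δ x y)
              ((TensorProduct.map (S x y) (S x y)) ∘ₗ (TensorProduct.comm k (A x y) (A x y)).toLinearMap ∘ₗ (Δ x y))))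
        ∘ₗ (TensorProduct.assoc k (A x y) (A x y) (A x y)).toLinearMap
      = (Mlin A mul y y x)
        ∘ₗ (TensorProduct.map ((Mlin A mul y x y) ∘ₗ TensorProduct.map ((Δ y x) ∘ₗ S x y) (Δ x y))
            ((TensorProduct.map (S x y) (S x y)) ∘ₗ (TensorProduct.comm k (A x y) (A x y)).toLinearMap ∘ₗ (Δ x y))) := by
    apply TensorProduct.ext_threefold
    intro a b c
    simp only [LinearMap.comp_apply, TensorProduct.map_tmul, LinearEquiv.coe_coe,
      TensorProduct.assoc_tmul]
    exact (hMassoc y x y x ((Δ y x) ((S x y) a)) (Δ x y b)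
      ((TensorProduct.map (S x y) (S x y)) ((TensorProduct.comm k (A x y) (A x y)) (Δ x y c)))).symm
  have hsplit2 : TensorProduct.map ((Δ y x) ∘ₗ S x y)
        ((Mlin A mul x y x ∘ₗ TensorProduct.map (Δ x y)
          ((TensorProduct.map (S x y) (S x y)) ∘ₗ (TensorProduct.comm k (A x y) (A x y)).toLinearMap ∘ₗ (Δ x y)))
          ∘ₗ Δ x y)
      = (TensorProduct.map ((Δ y x) ∘ₗ S x y)
          (Mlin A mul x y x ∘ₗ TensorProduct.map (Δ x y)
            ((TensorProduct.map (S x y) (S x y)) ∘ₗ (TensorProduct.comm k (A x y) (A x y)).toLinearMap ∘ₗ (Δ x y))))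
        ∘ₗ (TensorProduct.map LinearMap.id (Δ x y)) := by
    apply TensorProduct.ext'; intro a b; simp
  have e6 : (TensorProduct.map ((Mlin A mul y x y) ∘ₗ TensorProduct.map ((Δ y x) ∘ₗ S x y) (Δ x y))
        ((TensorProduct.map (S x y) (S x y)) ∘ₗ (TensorProduct.comm k (A x y) (A x y)).toLinearMap ∘ₗ (Δ x y)))
        ∘ₗ (TensorProduct.map (Δ x y) LinearMap.id)
      = TensorProduct.map (((Mlin A mul y x y) ∘ₗ TensorProduct.map ((Δ y x) ∘ₗ S x y) (Δ x y)) ∘ₗ Δ x y)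
          ((TensorProduct.map (S x y) (S x y)) ∘ₗ (TensorProduct.comm k (A x y) (A x y)).toLinearMap ∘ₗ (Δ x y)) := by
    apply TensorProduct.ext'; intro a b; simp
  intro h
  constructor
  · -- the comultiplicativity part
    conv_lhs => rw [show S x y h = S x y ((TensorProduct.rid k (A x y))
      ((TensorProduct.map LinearMap.id (ε x y)) (Δ x y h))) by rw [counit_right]]
    have N1' := LinearMap.congr_fun N1 (Δ x y h)
    simp only [LinearMap.comp_apply, LinearEquiv.coe_coe] at N1'
    rw [N1', ← hu]
    have hs2 := LinearMap.congr_fun hsplit2 (Δ x y h)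
    simp only [LinearMap.comp_apply] at hs2
    rw [hs2, ← coassoc x y h]
    have N7' := LinearMap.congr_fun N7 ((TensorProduct.map (Δ x y) LinearMap.id) (Δ x y h))
    simp only [LinearMap.comp_apply, LinearEquiv.coe_coe] at N7'
    rw [N7']
    have e6' := LinearMap.congr_fun e6 (Δ x y h)
    simp only [LinearMap.comp_apply] at e6'
    rw [e6', claim1]
    have N6' := LinearMap.congr_fun N6 (Δ x y h)
    simp only [LinearMap.comp_apply, LinearEquiv.coe_coe] at N6'
    rw [N6', counit_left x y h]
  · exact eps_part h
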